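/- Let m ≥ 3, r > 0, c_j = 2(j−1)r sin(π/m) for 1 ≤ j ≤ m+1, and let Q be the uniform distribution on [0, 2mr sin(π/m)]. Let n ≥ m+1 and let γ_n be a conditional unconstrained optimal set of n-points for Q with respect to the conditional set β = {c_j : 1 ≤ j ≤ m+1}. Set n_j = card(γ_n ∩ [c_j, c_{j+1}]) for 1 ≤ j ≤ m. Then n_j ≥ 2 for all j, n_1 + n_2 + ⋯ + n_m = n + m − 1, and |n_i − n_j| ∈ {0, 1} for all 1 ≤ i ≠ j ≤ m. -/

import Mathlib

/-!
On each cell `[c j, c (j + 1)]` of length `d = 2 r sin (π / m)`, whose endpoints lie in the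
conditional set, `k` points of a set (endpoints included) leave an error of at least
`d ^ 3 / (12 (k - 1) ^ 2)`, and equally spaced points attain it. So the counts `n_j` of an optimal
set minimize `∑ j, 1 / (k_j - 1) ^ 2` over all allocations with `k_j ≥ 2` and
`∑ k_j ≤ n + m - 1`. As `k ↦ 1 / (k - 1) ^ 2` is strictly decreasing and strictly convex, a
minimizer uses every point, and if `n_i ≥ n_j + 2` then moving a point from cell `i` to cell `j`
would lower the cost.
-/

open MeasureTheory Set Filter

/-- The uniform distribution on `[a, b]`: normalized Lebesgue measure restricted to `[a, b]`. -/
noncomputable def uniformOn (a b : ℝ) : Measure ℝ :=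
  (ENNReal.ofReal (b - a))⁻¹ • volume.restrict (Set.Icc a b)

/-- The distortion error of a set `s` of points for the measure `P`. -/
noncomputable def distortion (P : Measure ℝ) (s : Set ℝ) : ℝ :=
  ∫ x, sInf ((fun a => (x - a) ^ 2) '' s) ∂P

/-- The `n`-th conditional (unconstrained) quantization error for `P` with respect to
the conditional set `β`. -/
noncomputable def condQuantError (P : Measure ℝ) (β : Set ℝ) (n : ℕ) : ℝ :=
  sInf { v : ℝ | ∃ α : Set ℝ, α.Finite ∧ α.ncard ≤ n - β.ncard ∧ v = distortion P (α ∪ β) }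

noncomputable def minSqDist (s : Set ℝ) (x : ℝ) : ℝ :=
  sInf ((fun a => (x - a) ^ 2) '' s)

section minSqDist

variable {s : Set ℝ} {x a b : ℝ}

lemma bddBelow_image_sq (s : Set ℝ) (x : ℝ) : BddBelow ((fun a => (x - a) ^ 2) '' s) :=
  ⟨0, by rintro _ ⟨a, -, rfl⟩; positivity⟩

lemma minSqDist_nonneg (s : Set ℝ) (x : ℝ) : 0 ≤ minSqDist s x :=
  Real.sInf_nonneg <| by rintro _ ⟨a, -, rfl⟩; positivity

lemma minSqDist_le (ha : a ∈ s) (x : ℝ) : minSqDist s x ≤ (x - a) ^ 2 :=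
  csInf_le (bddBelow_image_sq s x) ⟨a, ha, rfl⟩

lemma le_minSqDist (hs : s.Nonempty) (h : ∀ a ∈ s, b ≤ (x - a) ^ 2) : b ≤ minSqDist s x :=
  le_csInf (hs.image _) <| by rintro _ ⟨a, ha, rfl⟩; exact h a ha

lemma continuous_minSqDist (hs : s.Finite) (hne : s.Nonempty) : Continuous (minSqDist s) := by
  have hne' : hs.toFinset.Nonempty := hs.toFinset_nonempty.mpr hne
  convert Continuous.finset_inf'_apply hne' (f := fun a x => (x - a) ^ 2)
    (fun a _ => by fun_prop) using 2 with x
  rw [Finset.inf'_eq_csInf_image, hs.coe_toFinset, minSqDist]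

lemma intervalIntegrable_minSqDist (hs : s.Finite) (hne : s.Nonempty) (u v : ℝ) :
    IntervalIntegrable (minSqDist s) volume u v :=
  (continuous_minSqDist hs hne).intervalIntegrable u v

end minSqDist

lemma integral_sub_sq (e a b : ℝ) :
    ∫ x in a..b, (x - e) ^ 2 = ((b - e) ^ 3 - (a - e) ^ 3) / 3 := by
  simp only [intervalIntegral.integral_comp_sub_right (fun x => x ^ 2), integral_pow]
  norm_num

lemma integral_min_sq_sub_sq {a b : ℝ} (hab : a ≤ b) :
    ∫ x in a..b, min ((x - a) ^ 2) ((x - b) ^ 2) = (b - a) ^ 3 / 12 := by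
  set mid := (a + b) / 2 with hmid
  have hint (u v : ℝ) : IntervalIntegrable (fun x => min ((x - a) ^ 2) ((x - b) ^ 2)) volume u v :=
    (by fun_prop : Continuous _).intervalIntegrable u v
  have left : ∫ x in a..mid, min ((x - a) ^ 2) ((x - b) ^ 2) = ∫ x in a..mid, (x - a) ^ 2 :=
    intervalIntegral.integral_congr fun x hx => by
      rw [uIcc_of_le (by rw [hmid]; linarith)] at hx
      exact min_eq_left (by rw [hmid] at hx; nlinarith [hx.1, hx.2])
  have right : ∫ x in mid..b, min ((x - a) ^ 2) ((x - b) ^ 2) = ∫ x in mid..b, (x - b) ^ 2 :=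
    intervalIntegral.integral_congr fun x hx => by
      rw [uIcc_of_le (by rw [hmid]; linarith)] at hx
      exact min_eq_right (by rw [hmid] at hx; nlinarith [hx.1, hx.2])
  rw [← intervalIntegral.integral_add_adjacent_intervals (hint a mid) (hint mid b), left, right,
    integral_sub_sq, integral_sub_sq]
  ring

section gap

variable {s : Set ℝ} {a b : ℝ}

lemma integral_minSqDist_le_of_mem (hs : s.Finite) (ha : a ∈ s) (hb : b ∈ s) (hab : a ≤ b) :
    ∫ x in a..b, minSqDist s x ≤ (b - a) ^ 3 / 12 := by
  rw [← integral_min_sq_sub_sq hab]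
  exact intervalIntegral.integral_mono_on hab (intervalIntegrable_minSqDist hs ⟨a, ha⟩ a b)
    ((by fun_prop : Continuous _).intervalIntegrable a b)
    fun x _ => le_min (minSqDist_le ha x) (minSqDist_le hb x)

lemma le_integral_minSqDist_of_gap (hs : s.Finite) (hne : s.Nonempty) (hab : a ≤ b)
    (hgap : ∀ y ∈ s, y ≤ a ∨ b ≤ y) :
    (b - a) ^ 3 / 12 ≤ ∫ x in a..b, minSqDist s x := by
  rw [← integral_min_sq_sub_sq hab]
  refine intervalIntegral.integral_mono_on hab ((by fun_prop : Continuous _).intervalIntegrable a b)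
    (intervalIntegrable_minSqDist hs hne a b) fun x hx => le_minSqDist hne fun y hy => ?_
  rcases hgap y hy with hy | hy
  · exact (min_le_left _ _).trans (by nlinarith [hx.1])
  · exact (min_le_right _ _).trans (by nlinarith [hx.2])

end gap

-- The error of `k` equally spaced points, endpoints included, for Lebesgue measure on an interval
-- of length `d`: each of the `k - 1` gaps of length `g` contributes `g ^ 3 / 12`.
noncomputable def quantCost (d : ℝ) (k : ℕ) : ℝ := d ^ 3 / (12 * ((k : ℝ) - 1) ^ 2)

lemma add_pow_three_div_sq_le {a b x y : ℝ} (ha : 0 ≤ a) (hb : 0 ≤ b) (hx : 0 < x) (hy : 0 < y) :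
    (a + b) ^ 3 / (x + y) ^ 2 ≤ a ^ 3 / x ^ 2 + b ^ 3 / y ^ 2 := by
  obtain ⟨A, rfl⟩ : ∃ A, a = x * A := ⟨a / x, by field_simp⟩
  obtain ⟨B, rfl⟩ : ∃ B, b = y * B := ⟨b / y, by field_simp⟩
  have hA : 0 ≤ A := (mul_nonneg_iff_of_pos_left hx).mp ha
  have hB : 0 ≤ B := (mul_nonneg_iff_of_pos_left hy).mp hb
  have key : (x + y) ^ 2 * (x * A ^ 3 + y * B ^ 3) - (x * A + y * B) ^ 3
      = x * y * (A - B) ^ 2 * (x * (2 * A + B) + y * (A + 2 * B)) := by ring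
  have hrhs : (x * A) ^ 3 / x ^ 2 + (y * B) ^ 3 / y ^ 2 = x * A ^ 3 + y * B ^ 3 := by
    field_simp
  rw [hrhs, div_le_iff₀ (by positivity)]
  linarith [show 0 ≤ x * y * (A - B) ^ 2 * (x * (2 * A + B) + y * (A + 2 * B)) by positivity]

lemma quantCost_add_le {a b : ℝ} {p q : ℕ} (ha : 0 ≤ a) (hb : 0 ≤ b) (hp : 2 ≤ p) (hq : 2 ≤ q) :
    quantCost (a + b) (p + q - 1) ≤ quantCost a p + quantCost b q := by
  have hp' : (2 : ℝ) ≤ p := by exact_mod_cast hp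
  have hq' : (2 : ℝ) ≤ q := by exact_mod_cast hq
  have hcast : ((p + q - 1 : ℕ) : ℝ) - 1 = ((p : ℝ) - 1) + ((q : ℝ) - 1) := by
    rw [Nat.cast_sub (by omega)]; push_cast; ring
  have h := add_pow_three_div_sq_le ha hb (x := (p : ℝ) - 1) (y := (q : ℝ) - 1)
    (by linarith) (by linarith)
  simp only [quantCost, hcast, mul_comm (12 : ℝ), ← div_div]
  rw [← add_div]
  exact div_le_div_of_nonneg_right h (by norm_num)

section quantCost

variable {d : ℝ}

lemma quantCost_succ_lt (hd : 0 < d) {a : ℕ} (ha : 2 ≤ a) :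
    quantCost d (a + 1) < quantCost d a := by
  have ha' : (2 : ℝ) ≤ a := by exact_mod_cast ha
  rw [quantCost, quantCost, Nat.cast_succ, add_sub_cancel_right]
  exact div_lt_div_of_pos_left (by positivity) (by nlinarith) (by nlinarith)

lemma one_div_sq_sub_one_div_sq_succ_lt {p q : ℝ} (hp : 0 < p) (hpq : p < q) :
    1 / q ^ 2 - 1 / (q + 1) ^ 2 < 1 / p ^ 2 - 1 / (p + 1) ^ 2 := by
  obtain ⟨e, he, rfl⟩ : ∃ e > 0, q = p + e := ⟨q - p, by linarith, by ring⟩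
  have hdiff (x : ℝ) (hx : 0 < x) :
      1 / x ^ 2 - 1 / (x + 1) ^ 2 = (2 * x + 1) / (x ^ 2 * (x + 1) ^ 2) := by
    field_simp
    ring
  rw [hdiff _ (by linarith), hdiff _ hp, div_lt_div_iff₀ (by positivity) (by positivity), ← sub_pos]
  -- a polynomial in `p` and `e` with positive coefficients
  ring_nf
  positivity

lemma quantCost_pred_add_quantCost_succ_lt (hd : 0 < d) {a b : ℕ} (hb : 2 ≤ b) (hab : b + 2 ≤ a) :
    quantCost d (a - 1) + quantCost d (b + 1) < quantCost d a + quantCost d b := by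
  have hb' : (2 : ℝ) ≤ b := by exact_mod_cast hb
  have hab' : (b : ℝ) + 2 ≤ a := by exact_mod_cast hab
  have h := one_div_sq_sub_one_div_sq_succ_lt (p := (b : ℝ) - 1) (q := (a : ℝ) - 2)
    (by linarith) (by linarith)
  have hscale (x : ℕ) : quantCost d x = d ^ 3 / 12 * (1 / ((x : ℝ) - 1) ^ 2) := by
    rw [quantCost, div_mul_div_comm, mul_one]
  have e1 : ((a - 1 : ℕ) : ℝ) - 1 = (a : ℝ) - 2 := by rw [Nat.cast_sub (by omega)]; push_cast; ring
  have e2 : ((b + 1 : ℕ) : ℝ) - 1 = (b : ℝ) - 1 + 1 := by push_cast; ring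
  have e3 : (a : ℝ) - 1 = (a : ℝ) - 2 + 1 := by ring
  rw [hscale, hscale, hscale, hscale, e1, e2, e3]
  linarith [mul_lt_mul_of_pos_left h (by positivity : (0 : ℝ) < d ^ 3 / 12)]

end quantCost

section interval

variable {s : Set ℝ} {u v w : ℝ}

lemma ncard_inter_Icc_add_ncard_inter_Icc (hs : s.Finite) (hw : w ∈ s) (huw : u ≤ w)
    (hwv : w ≤ v) :
    (s ∩ Icc u w).ncard + (s ∩ Icc w v).ncard = (s ∩ Icc u v).ncard + 1 := by
  have hinter : (s ∩ Icc u w) ∩ (s ∩ Icc w v) = {w} := by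
    ext y
    simp only [mem_inter_iff, mem_Icc, mem_singleton_iff]
    constructor
    · rintro ⟨⟨-, -, hyw⟩, -, hwy, -⟩
      exact le_antisymm hyw hwy
    · rintro rfl
      exact ⟨⟨hw, huw, le_rfl⟩, hw, le_rfl, hwv⟩
  rw [← ncard_union_add_ncard_inter _ _ (hs.inter_of_left _) (hs.inter_of_left _),
    ← inter_union_distrib_left, Icc_union_Icc_eq_Icc huw hwv, hinter, ncard_singleton]

lemma two_le_ncard_inter_Icc (hs : s.Finite) (hu : u ∈ s) (hv : v ∈ s) (huv : u < v) :
    2 ≤ (s ∩ Icc u v).ncard :=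
  (one_lt_ncard (hs.inter_of_left _)).mpr
    ⟨u, ⟨hu, left_mem_Icc.mpr huv.le⟩, v, ⟨hv, right_mem_Icc.mpr huv.le⟩, huv.ne⟩

-- Induction on the number of points: split `[u, v]` at a point of `s` inside it and recombine
-- with the Radon-type inequality `quantCost_add_le`.
theorem le_integral_minSqDist (hs : s.Finite) (hu : u ∈ s) (hv : v ∈ s) (huv : u < v) :
    quantCost (v - u) (s ∩ Icc u v).ncard ≤ ∫ x in u..v, minSqDist s x := by
  induction h : (s ∩ Icc u v).ncard using Nat.strong_induction_on generalizing u v with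
  | _ N ih =>
  by_cases hmid : ∃ w ∈ s, u < w ∧ w < v
  · obtain ⟨w, hw, huw, hwv⟩ := hmid
    have hsplit := ncard_inter_Icc_add_ncard_inter_Icc hs hw huw.le hwv.le
    have hleft := two_le_ncard_inter_Icc hs hu hw huw
    have hright := two_le_ncard_inter_Icc hs hw hv hwv
    calc quantCost (v - u) N
        = quantCost ((w - u) + (v - w)) ((s ∩ Icc u w).ncard + (s ∩ Icc w v).ncard - 1) := by
          congr 1 <;> [ring; omega]
      _ ≤ quantCost (w - u) (s ∩ Icc u w).ncard + quantCost (v - w) (s ∩ Icc w v).ncard :=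
          quantCost_add_le (by linarith) (by linarith) hleft hright
      _ ≤ (∫ x in u..w, minSqDist s x) + ∫ x in w..v, minSqDist s x :=
          add_le_add (ih _ (by omega) hu hw huw rfl) (ih _ (by omega) hw hv hwv rfl)
      _ = ∫ x in u..v, minSqDist s x :=
          intervalIntegral.integral_add_adjacent_intervals
            (intervalIntegrable_minSqDist hs ⟨u, hu⟩ u w)
            (intervalIntegrable_minSqDist hs ⟨u, hu⟩ w v)
  · push Not at hmid
    have hgap : ∀ y ∈ s, y ≤ u ∨ v ≤ y := fun y hy => by
      by_contra! hy'
      exact (hmid y hy hy'.1).not_gt hy'.2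
    have hpair : s ∩ Icc u v = {u, v} := by
      ext y
      simp only [mem_inter_iff, mem_Icc, mem_insert_iff, mem_singleton_iff]
      constructor
      · rintro ⟨hy, huy, hyv⟩
        rcases hgap y hy with h' | h'
        · exact Or.inl (le_antisymm h' huy)
        · exact Or.inr (le_antisymm hyv h')
      · rintro (rfl | rfl)
        exacts [⟨hu, le_rfl, huv.le⟩, ⟨hv, huv.le, le_rfl⟩]
    rw [← h, hpair, ncard_pair huv.ne]
    convert le_integral_minSqDist_of_gap hs ⟨u, hu⟩ huv.le hgap using 1
    norm_num [quantCost]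

lemma integral_minSqDist_le_sum (hs : s.Finite) {b : ℕ → ℝ} (hb : Monotone b) {K : ℕ}
    (hmem : ∀ t ≤ K, b t ∈ s) :
    ∫ x in b 0..b K, minSqDist s x ≤ ∑ t ∈ Finset.range K, (b (t + 1) - b t) ^ 3 / 12 := by
  induction K with
  | zero => simp
  | succ K ih =>
    have hne : s.Nonempty := ⟨b 0, hmem 0 K.succ.zero_le⟩
    rw [Finset.sum_range_succ, ← intervalIntegral.integral_add_adjacent_intervals
      (intervalIntegrable_minSqDist hs hne _ _) (intervalIntegrable_minSqDist hs hne _ _)]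
    exact add_le_add (ih fun t ht => hmem t (by omega))
      (integral_minSqDist_le_of_mem hs (hmem K (by omega)) (hmem (K + 1) le_rfl) (hb K.le_succ))

theorem integral_minSqDist_le_quantCost (hs : s.Finite) {K : ℕ} (hK : 0 < K) (huv : u ≤ v)
    (hmem : ∀ t ≤ K, u + t * ((v - u) / K) ∈ s) :
    ∫ x in u..v, minSqDist s x ≤ quantCost (v - u) (K + 1) := by
  have hK' : (0 : ℝ) < K := by exact_mod_cast hK
  have hb : Monotone fun t : ℕ => u + t * ((v - u) / K) := fun t t' htt' => by
    have : (t : ℝ) ≤ t' := by exact_mod_cast htt'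
    have : 0 ≤ (v - u) / K := div_nonneg (by linarith) hK'.le
    nlinarith
  have h := integral_minSqDist_le_sum hs hb hmem
  have hlast : u + (K : ℝ) * ((v - u) / K) = v := by field_simp; ring
  simp only [Nat.cast_zero, zero_mul, add_zero, hlast, Nat.cast_succ] at h
  have hgap (t : ℕ) :
      u + ((t : ℝ) + 1) * ((v - u) / K) - (u + t * ((v - u) / K)) = (v - u) / K := by
    ring
  refine h.trans (le_of_eq ?_)
  simp only [hgap, Finset.sum_const, Finset.card_range, nsmul_eq_mul, quantCost, Nat.cast_add,
    Nat.cast_one, add_sub_cancel_right]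
  field_simp

end interval

section partition

variable {s : Set ℝ} {c : ℕ → ℝ} {m : ℕ}

lemma sum_ncard_inter_Icc_add_one (hs : s.Finite) (hc : Monotone c)
    (hmem : ∀ j ∈ Finset.Icc 1 (m + 1), c j ∈ s) :
    ∑ j ∈ Finset.Icc 1 m, (s ∩ Icc (c j) (c (j + 1))).ncard + 1
      = (s ∩ Icc (c 1) (c (m + 1))).ncard + m := by
  induction m with
  | zero =>
    have h1 : c 1 ∈ s := hmem 1 (by simp)
    simp [inter_eq_right.mpr (singleton_subset_iff.mpr h1)]
  | succ m ih =>
    rw [Finset.sum_Icc_succ_top (by omega), add_right_comm,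
      ih fun j hj => hmem j (by simp only [Finset.mem_Icc] at hj ⊢; omega)]
    have := ncard_inter_Icc_add_ncard_inter_Icc hs (hmem (m + 1) (by simp))
      (hc (by omega : 1 ≤ m + 1)) (hc (by omega : m + 1 ≤ m + 1 + 1))
    omega

lemma distortion_uniformOn_eq_sum (hs : s.Finite) (hne : s.Nonempty) (hc : c 1 < c (m + 1)) :
    (c (m + 1) - c 1) * distortion (uniformOn (c 1) (c (m + 1))) s
      = ∑ j ∈ Finset.Icc 1 m, ∫ x in c j..c (j + 1), minSqDist s x := by
  rw [← Finset.Ico_add_one_right_eq_Icc, intervalIntegral.sum_integral_adjacent_intervals_Ico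
    (by omega) fun j _ => intervalIntegrable_minSqDist hs hne _ _,
    intervalIntegral.integral_of_le hc.le, ← integral_Icc_eq_integral_Ioc, distortion, uniformOn,
    integral_smul_measure, ENNReal.toReal_inv, ENNReal.toReal_ofReal (sub_nonneg.mpr hc.le),
    smul_eq_mul, ← mul_assoc, mul_inv_cancel₀ (sub_pos.mpr hc).ne', one_mul]
  rfl

end partition

lemma distortion_nonneg (P : Measure ℝ) (s : Set ℝ) : 0 ≤ distortion P s :=
  integral_nonneg (minSqDist_nonneg s)

lemma condQuantError_le_distortion {P : Measure ℝ} {α β : Set ℝ} {n : ℕ} (hα : α.Finite)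
    (hcard : α.ncard ≤ n - β.ncard) : condQuantError P β n ≤ distortion P (α ∪ β) :=
  csInf_le ⟨0, by rintro _ ⟨α', -, -, rfl⟩; exact distortion_nonneg P _⟩ ⟨α, hα, hcard, rfl⟩

section allocation

open Function

variable {ι M : Type*} [DecidableEq ι] [AddCommMonoid M] {s : Finset ι} {i j : ι}

lemma sum_comp_update_add (hi : i ∈ s) (F : ℕ → M) (k : ι → ℕ) (a : ℕ) :
    ∑ t ∈ s, F (update k i a t) + F (k i) = ∑ t ∈ s, F (k t) + F a := by
  rw [← Finset.add_sum_erase s _ hi, ← Finset.add_sum_erase s (fun t => F (k t)) hi, update_self,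
    Finset.sum_congr rfl fun t ht => congrArg F (update_of_ne (Finset.ne_of_mem_erase ht) a k)]
  abel

lemma sum_comp_update_update_add (hi : i ∈ s) (hj : j ∈ s) (hij : i ≠ j) (F : ℕ → M)
    (k : ι → ℕ) (a b : ℕ) :
    ∑ t ∈ s, F (update (update k i a) j b t) + (F (k i) + F (k j))
      = ∑ t ∈ s, F (k t) + (F a + F b) := by
  have h1 := sum_comp_update_add hj F (update k i a) b
  have h2 := sum_comp_update_add hi F k a
  rw [update_of_ne hij.symm] at h1
  calc ∑ t ∈ s, F (update (update k i a) j b t) + (F (k i) + F (k j))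
      = (∑ t ∈ s, F (update (update k i a) j b t) + F (k j)) + F (k i) := by abel
    _ = (∑ t ∈ s, F (update k i a t) + F (k i)) + F b := by rw [h1]; abel
    _ = ∑ t ∈ s, F (k t) + (F a + F b) := by rw [h2]; abel

lemma two_le_update {k : ι → ℕ} (hk : ∀ t ∈ s, 2 ≤ k t) {a : ℕ} (ha : 2 ≤ a) :
    ∀ t ∈ s, 2 ≤ update k i a t := fun t ht => by
  rw [update_apply]
  split_ifs
  exacts [ha, hk t ht]

def allocations (s : Finset ι) (N : ℕ) : Set (ι → ℕ) :=
  {k | (∀ i ∈ s, 2 ≤ k i) ∧ ∑ i ∈ s, k i ≤ N}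

variable {N : ℕ} {g : ℕ → ℝ} {k : ι → ℕ}

theorem sum_eq_of_isMinOn_allocations (hg : ∀ a, 2 ≤ a → g (a + 1) < g a)
    (hk : k ∈ allocations s N) (hmin : IsMinOn (fun k => ∑ i ∈ s, g (k i)) (allocations s N) k)
    (hs : s.Nonempty) : ∑ i ∈ s, k i = N := by
  by_contra hne
  obtain ⟨i, hi⟩ := hs
  have hcount := sum_comp_update_add hi id k (k i + 1)
  have hcost := sum_comp_update_add hi g k (k i + 1)
  simp only [id] at hcount
  have hk' : update k i (k i + 1) ∈ allocations s N :=
    ⟨two_le_update hk.1 (by linarith [hk.1 i hi]), by have := hk.2; omega⟩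
  have hle := isMinOn_iff.mp hmin _ hk'
  linarith [hg (k i) (hk.1 i hi)]

theorem le_add_one_of_isMinOn_allocations
    (hg : ∀ a b, 2 ≤ b → b + 2 ≤ a → g (a - 1) + g (b + 1) < g a + g b)
    (hk : k ∈ allocations s N) (hmin : IsMinOn (fun k => ∑ i ∈ s, g (k i)) (allocations s N) k) :
    ∀ i ∈ s, ∀ j ∈ s, k i ≤ k j + 1 := by
  intro i hi j hj
  by_contra! hlt
  have hij : i ≠ j := by rintro rfl; omega
  have hcount := sum_comp_update_update_add hi hj hij id k (k i - 1) (k j + 1)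
  have hcost := sum_comp_update_update_add hi hj hij g k (k i - 1) (k j + 1)
  simp only [id] at hcount
  have hk' : update (update k i (k i - 1)) j (k j + 1) ∈ allocations s N :=
    ⟨two_le_update (two_le_update hk.1 (by have := hk.1 j hj; omega)) (by linarith [hk.1 j hj]),
      by have := hk.2; omega⟩
  have hle := isMinOn_iff.mp hmin _ hk'
  linarith [hg (k i) (k j) (hk.1 j hj) (by omega)]

end allocation

-- The endpoints `t = 0` and `t = K j` are left out: they belong to the conditional set.
noncomputable def interiorGrid (c : ℕ → ℝ) (K : ℕ → ℕ) (m : ℕ) : Finset ℝ :=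
  (Finset.Icc 1 m).biUnion fun j =>
    (Finset.Ioo 0 (K j)).image fun t : ℕ => c j + t * ((c (j + 1) - c j) / K j)

section interiorGrid

variable {c : ℕ → ℝ} {K : ℕ → ℕ} {m : ℕ}

lemma card_interiorGrid_le : (interiorGrid c K m).card ≤ ∑ j ∈ Finset.Icc 1 m, (K j - 1) :=
  Finset.card_biUnion_le.trans <| Finset.sum_le_sum fun j _ =>
    Finset.card_image_le.trans (by rw [Nat.card_Ioo, Nat.sub_zero])

lemma mem_interiorGrid_union {β : Set ℝ} {j t : ℕ} (hj : j ∈ Finset.Icc 1 m) (hK : 0 < K j)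
    (ht : t ≤ K j) (hcj : c j ∈ β) (hcj' : c (j + 1) ∈ β) :
    c j + t * ((c (j + 1) - c j) / K j) ∈ (interiorGrid c K m : Set ℝ) ∪ β := by
  rcases Nat.eq_zero_or_pos t with rfl | ht0
  · simpa using Or.inr hcj
  rcases ht.lt_or_eq with htK | rfl
  · exact Or.inl <| Finset.mem_biUnion.mpr
      ⟨j, hj, Finset.mem_image.mpr ⟨t, Finset.mem_Ioo.mpr ⟨ht0, htK⟩, rfl⟩⟩
  · have hK' : (K j : ℝ) ≠ 0 := by exact_mod_cast hK.ne'
    right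
    convert hcj' using 1
    field_simp
    ring

end interiorGrid

section equallySpaced

variable {c : ℕ → ℝ} {d : ℝ} {m n : ℕ}

lemma strictMono_of_add_const (hd : 0 < d) (hc : ∀ j, c (j + 1) = c j + d) : StrictMono c :=
  strictMono_nat_of_lt_succ fun j => by rw [hc]; linarith

lemma ncard_image_Icc (hc : StrictMono c) (a b : ℕ) : (c '' Icc a b).ncard = b + 1 - a := by
  rw [ncard_image_of_injective _ hc.injective, ← Finset.coe_Icc, ncard_coe_finset, Nat.card_Icc]

lemma ncard_inter_Icc_mem_allocations (hc : StrictMono c) {s : Set ℝ} (hs : s.Finite)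
    (hβ : c '' Icc 1 (m + 1) ⊆ s) (hcard : s.ncard ≤ n) :
    (fun j => (s ∩ Icc (c j) (c (j + 1))).ncard) ∈ allocations (Finset.Icc 1 m) (n + m - 1) := by
  have hmem (j : ℕ) (hj : j ∈ Finset.Icc 1 (m + 1)) : c j ∈ s := hβ ⟨j, Finset.mem_Icc.mp hj, rfl⟩
  refine ⟨fun j hj => ?_, ?_⟩
  · have hj := Finset.mem_Icc.mp hj
    exact two_le_ncard_inter_Icc hs (hmem j (Finset.mem_Icc.mpr (by omega)))
      (hmem (j + 1) (Finset.mem_Icc.mpr (by omega))) (hc j.lt_succ_self)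
  · dsimp only
    have hcount := sum_ncard_inter_Icc_add_one hs hc.monotone hmem
    have hsub := ncard_le_ncard (inter_subset_left (s := s) (t := Icc (c 1) (c (m + 1)))) hs
    omega

lemma sum_quantCost_le_distortion (hd : 0 < d) (hc : ∀ j, c (j + 1) = c j + d) (hm : 0 < m)
    {s : Set ℝ} (hs : s.Finite) (hβ : c '' Icc 1 (m + 1) ⊆ s) :
    ∑ j ∈ Finset.Icc 1 m, quantCost d (s ∩ Icc (c j) (c (j + 1))).ncard
      ≤ (c (m + 1) - c 1) * distortion (uniformOn (c 1) (c (m + 1))) s := by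
  have hcmono := strictMono_of_add_const hd hc
  have hmem (j : ℕ) (hj : j ∈ Finset.Icc 1 (m + 1)) : c j ∈ s :=
    hβ ⟨j, Finset.mem_Icc.mp hj, rfl⟩
  rw [distortion_uniformOn_eq_sum hs ⟨c 1, hmem 1 (by simp)⟩ (hcmono (by omega))]
  refine Finset.sum_le_sum fun j hj => ?_
  rw [Finset.mem_Icc] at hj
  have h := le_integral_minSqDist hs (hmem j (Finset.mem_Icc.mpr (by omega)))
    (hmem (j + 1) (Finset.mem_Icc.mpr (by omega))) (hcmono j.lt_succ_self)
  rwa [show c (j + 1) - c j = d by rw [hc]; ring] at h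

lemma condQuantError_le_sum_quantCost (hd : 0 < d) (hc : ∀ j, c (j + 1) = c j + d) (hm : 0 < m)
    (hn : m + 1 ≤ n) {k : ℕ → ℕ} (hk : k ∈ allocations (Finset.Icc 1 m) (n + m - 1)) :
    (c (m + 1) - c 1) * condQuantError (uniformOn (c 1) (c (m + 1))) (c '' Icc 1 (m + 1)) n
      ≤ ∑ j ∈ Finset.Icc 1 m, quantCost d (k j) := by
  have hcmono := strictMono_of_add_const hd hc
  set β := c '' Icc 1 (m + 1)
  set α := interiorGrid c (fun j => k j - 1) m
  have hmem (j : ℕ) (hj : j ∈ Finset.Icc 1 (m + 1)) : c j ∈ β := ⟨j, Finset.mem_Icc.mp hj, rfl⟩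
  have hβcard : β.ncard = m + 1 := by rw [ncard_image_Icc hcmono]; omega
  have hαcard : (α : Set ℝ).ncard ≤ n - β.ncard := by
    have hsum : ∑ j ∈ Finset.Icc 1 m, (k j - 2) + 2 * m = ∑ j ∈ Finset.Icc 1 m, k j := by
      rw [← Finset.sum_congr rfl fun j hj => Nat.sub_add_cancel (hk.1 j hj),
        Finset.sum_add_distrib, Finset.sum_const, Nat.card_Icc, smul_eq_mul]
      omega
    have hcard : α.card ≤ ∑ j ∈ Finset.Icc 1 m, (k j - 2) :=
      card_interiorGrid_le.trans_eq (Finset.sum_congr rfl fun j _ => Nat.sub_sub _ _ _)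
    rw [ncard_coe_finset, hβcard]
    have := hk.2
    omega
  have hfin : ((α : Set ℝ) ∪ β).Finite := α.finite_toSet.union ((finite_Icc _ _).image c)
  calc (c (m + 1) - c 1) * condQuantError (uniformOn (c 1) (c (m + 1))) β n
      ≤ (c (m + 1) - c 1) * distortion (uniformOn (c 1) (c (m + 1))) (α ∪ β) :=
        mul_le_mul_of_nonneg_left (condQuantError_le_distortion α.finite_toSet hαcard)
          (sub_nonneg.mpr (hcmono.monotone (by omega)))
    _ = ∑ j ∈ Finset.Icc 1 m, ∫ x in c j..c (j + 1), minSqDist (α ∪ β) x :=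
        distortion_uniformOn_eq_sum hfin ⟨c 1, Or.inr (hmem 1 (by simp))⟩ (hcmono (by omega))
    _ ≤ ∑ j ∈ Finset.Icc 1 m, quantCost d (k j) := Finset.sum_le_sum fun j hj => by
        have hk2 := hk.1 j hj
        have hj' := Finset.mem_Icc.mp hj
        have h := integral_minSqDist_le_quantCost hfin (K := k j - 1) (by omega)
          (hcmono.monotone j.le_succ) fun t ht => mem_interiorGrid_union hj (by omega) ht
            (hmem j (Finset.mem_Icc.mpr (by omega))) (hmem (j + 1) (Finset.mem_Icc.mpr (by omega)))
        rwa [Nat.sub_add_cancel (by omega), show c (j + 1) - c j = d by rw [hc]; ring] at h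

theorem isMinOn_ncard_inter_Icc (hd : 0 < d) (hc : ∀ j, c (j + 1) = c j + d) (hm : 0 < m)
    (hn : m + 1 ≤ n) {s : Set ℝ} (hs : s.Finite) (hβ : c '' Icc 1 (m + 1) ⊆ s)
    (hopt : distortion (uniformOn (c 1) (c (m + 1))) s
      = condQuantError (uniformOn (c 1) (c (m + 1))) (c '' Icc 1 (m + 1)) n) :
    IsMinOn (fun k => ∑ j ∈ Finset.Icc 1 m, quantCost d (k j))
      (allocations (Finset.Icc 1 m) (n + m - 1)) (fun j => (s ∩ Icc (c j) (c (j + 1))).ncard) :=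
  isMinOn_iff.mpr fun _ hk => (sum_quantCost_le_distortion hd hc hm hs hβ).trans
    (hopt ▸ condQuantError_le_sum_quantCost hd hc hm hn hk)

end equallySpaced

/-- Lemma 4.3: if `γ_n = α ∪ β` is a conditional optimal set of `n`-points for the uniform
distribution `Q` on `[0, 2mr sin(π/m)]` with respect to the conditional set
`β = {c_j : 1 ≤ j ≤ m+1}`, `c_j = 2(j-1)r sin(π/m)`, and `n_j = card(γ_n ∩ [c_j, c_{j+1}])`,
then `n_j ≥ 2`, `Σ n_j = n + m - 1`, and `|n_i - n_j| ∈ {0, 1}`. -/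
theorem stmt12 (m : ℕ) (hm : 3 ≤ m) (r : ℝ) (hr : 0 < r) (n : ℕ) (hn : m + 1 ≤ n)
    (c : ℕ → ℝ) (hc : ∀ j : ℕ, c j = 2 * ((j : ℝ) - 1) * r * Real.sin (Real.pi / m))
    (Q : Measure ℝ) (hQ : Q = uniformOn 0 (2 * m * r * Real.sin (Real.pi / m)))
    (β : Set ℝ) (hβ : β = c '' Set.Icc 1 (m + 1))
    (α : Set ℝ) (hαf : α.Finite) (hαcard : α.ncard ≤ n - β.ncard)
    (hopt : distortion Q (α ∪ β) = condQuantError Q β n)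
    (nn : ℕ → ℕ) (hnn : ∀ j : ℕ, nn j = ((α ∪ β) ∩ Set.Icc (c j) (c (j + 1))).ncard) :
    (∀ j ∈ Set.Icc 1 m, 2 ≤ nn j)
    ∧ (∑ j ∈ Finset.Icc 1 m, nn j) = n + m - 1
    ∧ (∀ i ∈ Set.Icc 1 m, ∀ j ∈ Set.Icc 1 m, i ≠ j →
        nn i = nn j ∨ nn i = nn j + 1 ∨ nn j = nn i + 1) := by
  set d := 2 * r * Real.sin (Real.pi / m)
  have hd : 0 < d := mul_pos (by positivity) <| Real.sin_pos_of_pos_of_lt_pi (by positivity)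
    (div_lt_self Real.pi_pos (by exact_mod_cast (by omega : 1 < m)))
  have hcd (j : ℕ) : c (j + 1) = c j + d := by rw [hc, hc]; push_cast; ring
  have hcmono := strictMono_of_add_const hd hcd
  obtain rfl : Q = uniformOn (c 1) (c (m + 1)) := by rw [hQ, hc, hc]; push_cast; ring_nf
  subst hβ
  have hγ : (α ∪ c '' Icc 1 (m + 1)).Finite := hαf.union ((finite_Icc _ _).image c)
  have hcard : (α ∪ c '' Icc 1 (m + 1)).ncard ≤ n := by
    have := ncard_union_le α (c '' Icc 1 (m + 1))
    rw [ncard_image_Icc hcmono] at hαcard this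
    omega
  have halloc := ncard_inter_Icc_mem_allocations hcmono hγ subset_union_right hcard
  have hmin := isMinOn_ncard_inter_Icc hd hcd (by omega) hn hγ subset_union_right hopt
  simp only [← hnn] at halloc hmin
  have hsum := sum_eq_of_isMinOn_allocations (fun _ => quantCost_succ_lt hd) halloc hmin
    ⟨1, Finset.mem_Icc.mpr (by omega)⟩
  have hbal := le_add_one_of_isMinOn_allocations
    (fun _ _ => quantCost_pred_add_quantCost_succ_lt hd) halloc hmin
  refine ⟨fun j hj => halloc.1 j (Finset.mem_Icc.mpr hj), hsum, fun i hi j hj _ => ?_⟩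
  have := hbal i (Finset.mem_Icc.mpr hi) j (Finset.mem_Icc.mpr hj)
  have := hbal j (Finset.mem_Icc.mpr hj) i (Finset.mem_Icc.mpr hi)
  omega
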